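/- Let n ≥ 1 be an integer and ω : ℝ → ℂ a continuous 2π-periodic function. Then ∫₀^{2π} ω(α) · (|z|² + 1 − conj(z)·e^{iα} − z·e^{−iα})^{n−1} dα = 0 for every z in the open unit disk if and only if ∫₀^{2π} ω(α) e^{−imα} dα = 0 for every integer m with |m| ≤ n−1. (This is the characterization of the kernel of the Poisson–Helgason transform 𝒫_{−n}: its kernel consists exactly of the ω whose Fourier coefficients of order at most n−1 all vanish.) -/

import Mathlib

open Complex Real

/-- The `m`-th Fourier coefficient `ω̂(m) = ∫₀^{2π} ω(α) e^{−imα} dα`. -/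
noncomputable def fourierCoeffInt (ω : ℝ → ℂ) (m : ℤ) : ℂ :=
  ∫ α in (0 : ℝ)..(2 * Real.pi), ω α * Complex.exp (-(m : ℂ) * α * Complex.I)

/-- The integral `∫₀^{2π} ω(α) (|z|² + 1 − conj z·e^{iα} − z·e^{−iα})^{n−1} dα`, i.e.
`(1−|z|²)^{n−1} 𝒫_{−n}(ω)(z)`. -/
noncomputable def poissonInt (n : ℕ) (ω : ℝ → ℂ) (z : ℂ) : ℂ :=
  ∫ α in (0 : ℝ)..(2 * Real.pi),
    ω α * (((‖z‖ ^ 2 : ℝ) : ℂ) + 1 - (starRingEnd ℂ) z * Complex.exp (α * Complex.I)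
            - z * Complex.exp (-(α * Complex.I))) ^ (n - 1)

/-!
Writing `z = -w`, the kernel factors as `|1 + w e^{-iα}|²`, so the binomial theorem turns
`poissonInt (N + 1) ω (-w)` into `∑_{j,k ≤ N} C(N,j) C(N,k) w^j w̄^k ω̂(j - k)` (the sign change
removes the factors `(-1)^(j+k)`). Only the coefficients `ω̂(m)`, `|m| ≤ N`, occur, which gives one
direction. Conversely, at `w = e^{iθ}/2` the sum is a trigonometric polynomial in `θ` whose `m`-th
Fourier coefficient is `2π ω̂(m)` times the positive number
`∑_{j - k = m} C(N,j) C(N,k) 2^{-(j+k)}`; it vanishes identically, hence so does `ω̂(m)`.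
-/

open Finset ComplexConjugate intervalIntegral
open MeasureTheory (volume)

noncomputable def poissonHelgasonKernel (z : ℂ) (α : ℝ) : ℂ :=
  ((‖z‖ ^ 2 : ℝ) : ℂ) + 1 - conj z * exp (α * I) - z * exp (-(α * I))

lemma poissonInt_eq_integral_poissonHelgasonKernel (n : ℕ) (ω : ℝ → ℂ) (z : ℂ) :
    poissonInt n ω z = ∫ α in (0 : ℝ)..(2 * π), ω α * poissonHelgasonKernel z α ^ (n - 1) :=
  rfl

lemma poissonHelgasonKernel_neg (w : ℂ) (α : ℝ) :
    poissonHelgasonKernel (-w) α = (1 + w * exp (-(α * I))) * (1 + conj w * exp (α * I)) := by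
  have hnorm : ((‖-w‖ ^ 2 : ℝ) : ℂ) = w * conj w := by
    rw [norm_neg, mul_conj, normSq_eq_norm_sq]
  have hexp : exp (-(α * I)) * exp (α * I) = 1 := by
    rw [← Complex.exp_add, neg_add_cancel, Complex.exp_zero]
  rw [poissonHelgasonKernel, hnorm, map_neg]
  linear_combination (-(w * conj w)) * hexp

lemma one_add_mul_one_add_pow {R : Type*} [CommSemiring R] (a b : R) (N : ℕ) :
    ((1 + a) * (1 + b)) ^ N = ∑ p ∈ range (N + 1) ×ˢ range (N + 1),
      (N.choose p.1 * N.choose p.2 : R) * a ^ p.1 * b ^ p.2 := by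
  rw [mul_pow, add_comm 1 a, add_comm 1 b, add_pow, add_pow, sum_mul_sum, sum_product]
  refine sum_congr rfl fun j _ => sum_congr rfl fun k _ => ?_
  simp only [one_pow, mul_one]
  ring

lemma exp_pow_mul_exp_neg_pow (ζ : ℂ) (j k : ℕ) :
    exp ζ ^ j * exp (-ζ) ^ k = exp (((j - k : ℤ) : ℂ) * ζ) := by
  rw [← Complex.exp_nat_mul, ← Complex.exp_nat_mul, ← Complex.exp_add]
  push_cast
  ring_nf

lemma poissonInt_neg_eq_sum {ω : ℝ → ℂ} (hω : IntervalIntegrable ω volume 0 (2 * π))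
    (N : ℕ) (w : ℂ) :
    poissonInt (N + 1) ω (-w) = ∑ p ∈ range (N + 1) ×ˢ range (N + 1),
      (N.choose p.1 * N.choose p.2 : ℂ) * w ^ p.1 * conj w ^ p.2
        * fourierCoeffInt ω (p.1 - p.2) := by
  have hexp (α : ℝ) (p : ℕ × ℕ) : exp (-(α * I)) ^ p.1 * exp (α * I) ^ p.2
      = exp (-((p.1 - p.2 : ℤ) : ℂ) * α * I) := by
    simpa only [neg_neg, neg_mul, mul_neg, mul_assoc] using exp_pow_mul_exp_neg_pow (-(α * I)) p.1 p.2
  simp only [poissonInt_eq_integral_poissonHelgasonKernel, Nat.add_sub_cancel, poissonHelgasonKernel_neg,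
    one_add_mul_one_add_pow, mul_sum, fourierCoeffInt]
  rw [integral_finsetSum]
  · refine sum_congr rfl fun p _ => ?_
    rw [← integral_const_mul]
    refine integral_congr fun α _ => ?_
    simp only [mul_pow, ← hexp]
    ring
  · exact fun p _ => hω.mul_continuousOn (Continuous.continuousOn (by fun_prop))

lemma ofReal_mul_exp_pow_mul_conj_pow (r θ : ℝ) (j k : ℕ) :
    ((r : ℂ) * exp (θ * I)) ^ j * conj ((r : ℂ) * exp (θ * I)) ^ k
      = (r : ℂ) ^ (j + k) * exp (((j - k : ℤ) : ℂ) * θ * I) := by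
  have hconj : conj ((r : ℂ) * exp (θ * I)) = r * exp (-(θ * I)) := by
    rw [map_mul, conj_ofReal, ← exp_conj, map_mul, conj_ofReal, conj_I, mul_neg]
  rw [hconj, mul_pow, mul_pow, mul_mul_mul_comm, ← pow_add, exp_pow_mul_exp_neg_pow, mul_assoc _ _ I]

lemma integral_exp_int_mul_I (t : ℤ) :
    ∫ θ in (0 : ℝ)..(2 * π), exp (t * θ * I) = if t = 0 then ((2 * π : ℝ) : ℂ) else 0 := by
  split_ifs with ht
  · simp [ht]
  · have hc : (t : ℂ) * I ≠ 0 := mul_ne_zero (by exact_mod_cast ht) I_ne_zero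
    simp_rw [mul_right_comm _ _ I]
    rw [integral_exp_mul_complex hc]
    have hper : exp ((t : ℂ) * I * (2 * π)) = 1 := by
      rw [← exp_int_mul_two_pi_mul_I t]
      ring_nf
    simp [hper]

lemma fourierCoeffInt_sum_exp {ι : Type*} (s : Finset ι) (b : ι → ℂ) (f : ι → ℤ) (m : ℤ) :
    fourierCoeffInt (fun θ => ∑ i ∈ s, b i * exp (f i * θ * I)) m
      = 2 * π * ∑ i ∈ s with f i = m, b i := by
  simp only [fourierCoeffInt, sum_mul]
  rw [integral_finsetSum fun i _ => Continuous.intervalIntegrable (by fun_prop) _ _, sum_filter,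
    mul_sum]
  refine sum_congr rfl fun i _ => ?_
  have hshift (θ : ℝ) : b i * exp (f i * θ * I) * exp (-m * θ * I)
      = b i * exp (((f i - m : ℤ) : ℂ) * θ * I) := by
    rw [mul_assoc, ← Complex.exp_add]
    push_cast
    ring_nf
  simp only [hshift, integral_const_mul, integral_exp_int_mul_I, sub_eq_zero]
  split_ifs <;> push_cast <;> ring

lemma sum_choose_mul_choose_pow_pos {N : ℕ} {m : ℤ} (hm : |m| ≤ N) {r : ℝ} (hr : 0 < r) :
    0 < ∑ p ∈ range (N + 1) ×ˢ range (N + 1) with (p.1 - p.2 : ℤ) = m,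
      (N.choose p.1 * N.choose p.2 : ℝ) * r ^ (p.1 + p.2) := by
  obtain ⟨hm₁, hm₂⟩ := abs_le.1 hm
  refine sum_pos' (fun p _ => by positivity) ⟨(m.toNat, (-m).toNat), ?_, ?_⟩
  · simp only [mem_filter, mem_product, mem_range]
    omega
  · have h₁ := Nat.choose_pos (n := N) (k := m.toNat) (by omega)
    have h₂ := Nat.choose_pos (n := N) (k := (-m).toNat) (by omega)
    positivity

theorem poissonInt_eq_zero_of_fourierCoeffInt_eq_zero {ω : ℝ → ℂ}
    (hω : IntervalIntegrable ω volume 0 (2 * π)) {N : ℕ}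
    (h : ∀ m : ℤ, |m| ≤ N → fourierCoeffInt ω m = 0) (z : ℂ) : poissonInt (N + 1) ω z = 0 := by
  rw [← neg_neg z, poissonInt_neg_eq_sum hω]
  refine sum_eq_zero fun p hp => ?_
  rw [mem_product, mem_range, mem_range] at hp
  rw [h _ (abs_le.2 ⟨by omega, by omega⟩), mul_zero]

theorem fourierCoeffInt_eq_zero_of_poissonInt_eq_zero {ω : ℝ → ℂ}
    (hω : IntervalIntegrable ω volume 0 (2 * π)) {N : ℕ}
    (h : ∀ z : ℂ, ‖z‖ < 1 → poissonInt (N + 1) ω z = 0) {m : ℤ} (hm : |m| ≤ N) :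
    fourierCoeffInt ω m = 0 := by
  set s := range (N + 1) ×ˢ range (N + 1)
  set c : ℕ × ℕ → ℝ := fun p => N.choose p.1 * N.choose p.2 * (1 / 2) ^ (p.1 + p.2)
  have htrig : (fun θ : ℝ => ∑ p ∈ s, (c p * fourierCoeffInt ω (p.1 - p.2))
      * exp (((p.1 - p.2 : ℤ) : ℂ) * θ * I)) = 0 := by
    funext θ
    have hz : ‖-(((1 / 2 : ℝ) : ℂ) * exp (θ * I))‖ < 1 := by
      rw [norm_neg, norm_mul, norm_exp_ofReal_mul_I]
      norm_num
    rw [Pi.zero_apply, ← h _ hz, poissonInt_neg_eq_sum hω]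
    refine sum_congr rfl fun p _ => ?_
    rw [mul_assoc _ (_ ^ p.1), ofReal_mul_exp_pow_mul_conj_pow]
    simp only [c]
    push_cast
    ring
  have hfiber : ∑ p ∈ s with (p.1 - p.2 : ℤ) = m, (c p : ℂ) * fourierCoeffInt ω (p.1 - p.2)
      = ((∑ p ∈ s with (p.1 - p.2 : ℤ) = m, c p : ℝ) : ℂ) * fourierCoeffInt ω m := by
    rw [ofReal_sum, sum_mul]
    exact sum_congr rfl fun p hp => by rw [(mem_filter.1 hp).2]
  have hzero : fourierCoeffInt (fun θ : ℝ => ∑ p ∈ s, (c p * fourierCoeffInt ω (p.1 - p.2))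
      * exp (((p.1 - p.2 : ℤ) : ℂ) * θ * I)) m = 0 := by
    rw [htrig]
    simp [fourierCoeffInt]
  rw [fourierCoeffInt_sum_exp, hfiber] at hzero
  have hS : ((∑ p ∈ s with (p.1 - p.2 : ℤ) = m, c p : ℝ) : ℂ) ≠ 0 :=
    ofReal_ne_zero.2 (sum_choose_mul_choose_pow_pos hm (r := 1 / 2) (by norm_num)).ne'
  have h2π : (2 * π : ℂ) ≠ 0 := mul_ne_zero two_ne_zero (ofReal_ne_zero.2 pi_ne_zero)
  exact (mul_eq_zero.1 ((mul_eq_zero.1 hzero).resolve_left h2π)).resolve_left hS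

theorem kernel_poissonHelgason_neg_n_general (n : ℕ) (hn : 1 ≤ n) (ω : ℝ → ℂ)
    (hcont : Continuous ω) :
    (∀ z : ℂ, ‖z‖ < 1 → poissonInt n ω z = 0) ↔
      (∀ m : ℤ, |m| ≤ (n : ℤ) - 1 → fourierCoeffInt ω m = 0) := by
  obtain ⟨N, rfl⟩ := Nat.exists_eq_add_of_le' hn
  have hω := hcont.intervalIntegrable (μ := volume) 0 (2 * π)
  rw [Nat.cast_succ, add_sub_cancel_right]
  exact ⟨fun h _ hm => fourierCoeffInt_eq_zero_of_poissonInt_eq_zero hω h hm,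
    fun h z _ => poissonInt_eq_zero_of_fourierCoeffInt_eq_zero hω h z⟩

theorem kernel_poissonHelgason_neg_n (n : ℕ) (hn : 1 ≤ n) (ω : ℝ → ℂ)
    (hcont : Continuous ω) (hper : ∀ α : ℝ, ω (α + 2 * Real.pi) = ω α) :
    (∀ z : ℂ, ‖z‖ < 1 → poissonInt n ω z = 0) ↔
      (∀ m : ℤ, |m| ≤ (n : ℤ) - 1 → fourierCoeffInt ω m = 0) :=
  kernel_poissonHelgason_neg_n_general n hn ω hcont
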